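/- arXiv:2012.12937 — 3 statements merged into one kernel-verified Lean document; each statement's English description precedes it below -/
import Mathlib

section
/- For all y⁰, y¹ in the interior C° of C, the auxiliary controllability time is a lower bound for the true minimal controllability time: T̄_C(y⁰,y¹) ≤ T_C(y⁰,y¹). (This holds for an arbitrary measurable constraint set C; no convexity or boundedness of C is needed.) -/
noncomputable section
open MeasureTheory Set RealInnerProductSpace
open scoped ENNReal

/-- Euclidean state space `ℝ^n`. -/
abbrev Euc (n : ℕ) := EuclideanSpace ℝ (Fin n)

/-- Orthogonal projection onto a subspace, viewed as a map into the ambient space. -/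
noncomputable def projS {n : ℕ} (G : Submodule ℝ (Euc n)) (x : Euc n) : Euc n :=
  (G.orthogonalProjection x : Euc n)

/-- The set of admissible controllability times `T` for the system `ẏ = F(y) + B u`
with state constraint `y(t) ∈ C`, steering `y0` to `y1`.  The control `u` is a
measurable essentially bounded function; the absolutely continuous trajectory `y`
is encoded via the integral equation. -/
def ctrlTimes {n m : ℕ} (F : Euc n → Euc n) (B : Euc m →ₗ[ℝ] Euc n)
    (C : Set (Euc n)) (y0 y1 : Euc n) : Set ℝ :=
  {T | 0 < T ∧ ∃ u : ℝ → Euc m, ∃ y : ℝ → Euc n,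
    Measurable u ∧ (∃ M : ℝ, ∀ t ∈ Icc (0:ℝ) T, ‖u t‖ ≤ M) ∧
    ContinuousOn y (Icc 0 T) ∧
    IntervalIntegrable (fun s => F (y s) + B (u s)) volume 0 T ∧
    (∀ t ∈ Icc (0:ℝ) T, y t = y0 + ∫ s in (0:ℝ)..t, (F (y s) + B (u s))) ∧
    (∀ t ∈ Icc (0:ℝ) T, y t ∈ C) ∧ y 0 = y0 ∧ y T = y1}

/-- The minimal controllability time `T_C(y0, y1)` (with the convention `inf ∅ = ∞`). -/
noncomputable def minTime {n m : ℕ} (F : Euc n → Euc n) (B : Euc m →ₗ[ℝ] Euc n)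
    (C : Set (Euc n)) (y0 y1 : Euc n) : ℝ≥0∞ :=
  sInf (ENNReal.ofReal '' ctrlTimes F B C y0 y1)

/-- Times for the differential inclusion `ż(t) ∈ F_H((z(t) + H^⊥) ∩ C)` steering
`P_H y0` to `P_H y1`; `z` is absolutely continuous, encoded via its a.e. derivative `v`. -/
def slowTimes {n : ℕ} (F : Euc n → Euc n) (H : Submodule ℝ (Euc n))
    (C : Set (Euc n)) (y0 y1 : Euc n) : Set ℝ :=
  {T | 0 < T ∧ ∃ z v : ℝ → Euc n,
    IntervalIntegrable v volume 0 T ∧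
    (∀ t ∈ Icc (0:ℝ) T, z t = projS H y0 + ∫ s in (0:ℝ)..t, v s) ∧
    (∀ᵐ t ∂(volume.restrict (Icc (0:ℝ) T)),
      v t ∈ (fun x => projS H (F x)) '' (((fun w => z t + w) '' (Hᗮ : Set (Euc n))) ∩ C)) ∧
    z T = projS H y1}

/-- The auxiliary controllability time `T̄_C(y0, y1)` (with `inf ∅ = ∞`). -/
noncomputable def slowTime {n : ℕ} (F : Euc n → Euc n) (H : Submodule ℝ (Euc n))
    (C : Set (Euc n)) (y0 y1 : Euc n) : ℝ≥0∞ :=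
  sInf (ENNReal.ofReal '' slowTimes F H C y0 y1)

/-!
Projecting onto `H = (ran B)ᗮ` annihilates the control term, so for any admissible pair `(u, y)`
the curve `z = P_H y` satisfies `ż = P_H F(y)` with `y(t) ∈ (z(t) + Hᗮ) ∩ C`. Hence every time
admissible for the control system is admissible for the differential inclusion.
-/

theorem projS_eq_starProjection {n : ℕ} (G : Submodule ℝ (Euc n)) :
    projS G = G.starProjection :=
  rfl

theorem projS_add {n : ℕ} (G : Submodule ℝ (Euc n)) (x y : Euc n) :
    projS G (x + y) = projS G x + projS G y :=
  map_add G.starProjection x y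

theorem projS_orthogonal_range_apply {n m : ℕ} (B : Euc m →ₗ[ℝ] Euc n) (w : Euc m) :
    projS (LinearMap.range B)ᗮ (B w) = 0 :=
  Submodule.starProjection_orthogonal_apply_eq_zero (LinearMap.mem_range_self B w)

theorem sub_projS_mem_orthogonal {n : ℕ} (G : Submodule ℝ (Euc n)) (x : Euc n) :
    x - projS G x ∈ Gᗮ :=
  G.sub_starProjection_mem_orthogonal x

theorem projS_intervalIntegral {n : ℕ} (G : Submodule ℝ (Euc n)) {f : ℝ → Euc n} {a b : ℝ}
    (hf : IntervalIntegrable f volume a b) :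
    projS G (∫ s in a..b, f s) = ∫ s in a..b, projS G (f s) := by
  rw [projS_eq_starProjection]
  exact (G.starProjection.intervalIntegral_comp_comm hf).symm

theorem ctrlTimes_subset_slowTimes {n m : ℕ} (F : Euc n → Euc n) (B : Euc m →ₗ[ℝ] Euc n)
    (C : Set (Euc n)) (y0 y1 : Euc n) :
    ctrlTimes F B C y0 y1 ⊆ slowTimes F (LinearMap.range B)ᗮ C y0 y1 := by
  rintro T ⟨hT, u, y, -, -, -, hint, hy, hyC, -, hyT⟩
  set H := (LinearMap.range B)ᗮ
  have hproj_drift : ∀ t, projS H (F (y t) + B (u t)) = projS H (F (y t)) := fun t => by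
    rw [projS_add, projS_orthogonal_range_apply, add_zero]
  refine ⟨hT, fun t => projS H (y t), fun t => projS H (F (y t) + B (u t)), ?_, ?_, ?_, ?_⟩
  · rw [projS_eq_starProjection]
    exact ⟨H.starProjection.integrable_comp hint.1, H.starProjection.integrable_comp hint.2⟩
  · intro t ht
    have hint_t : IntervalIntegrable (fun s => F (y s) + B (u s)) volume 0 t :=
      hint.mono_set (uIcc_subset_uIcc left_mem_uIcc (by rwa [uIcc_of_le hT.le]))
    dsimp only
    rw [hy t ht, projS_add, projS_intervalIntegral H hint_t]
  · filter_upwards [ae_restrict_mem measurableSet_Icc] with t ht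
    refine ⟨y t, ⟨⟨y t - projS H (y t), sub_projS_mem_orthogonal H (y t), ?_⟩, hyC t ht⟩,
      (hproj_drift t).symm⟩
    exact add_sub_cancel _ _
  · exact congrArg (projS H) hyT

theorem slowTime_le_minTime_general {n m : ℕ}
    (F : Euc n → Euc n)
    (B : Euc m →ₗ[ℝ] Euc n)
    (C : Set (Euc n))
    (y0 y1 : Euc n) :
    slowTime F (LinearMap.range B)ᗮ C y0 y1 ≤ minTime F B C y0 y1 :=
  sInf_le_sInf (image_mono (ctrlTimes_subset_slowTimes F B C y0 y1))

/-- Lemma 2 of the paper.  For the system `ẏ = F(y) + Bu` with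
`F` Lipschitz, `B` an injective linear map `ℝ^m → ℝ^n` (`m < n`), an arbitrary
measurable constraint set `C`, and `H = (ran B)^⊥`: for all `y⁰, y¹` in the interior
of `C`, the auxiliary controllability time is a lower bound for the true minimal
controllability time: `T̄_C(y⁰, y¹) ≤ T_C(y⁰, y¹)`. -/
theorem slowTime_le_minTime {n m : ℕ} (hmn : m < n)
    (F : Euc n → Euc n) (L_F : ℝ) (hLF : 0 < L_F) (hF : LipschitzWith L_F.toNNReal F)
    (B : Euc m →ₗ[ℝ] Euc n) (hB : Function.Injective B)
    (C : Set (Euc n)) (hC : MeasurableSet C)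
    (y0 y1 : Euc n) (hy0 : y0 ∈ interior C) (hy1 : y1 ∈ interior C) :
    slowTime F (LinearMap.range B)ᗮ C y0 y1 ≤ minTime F B C y0 y1 :=
  slowTime_le_minTime_general F B C y0 y1
end
end

section
/- Suppose dim H = 1 (i.e. m = n−1), and let h₀ := P_H y⁰ and h₁ := P_H y¹ with h₀ ≠ h₁, where y⁰, y¹ ∈ C°. If s(h₂,h₀,h₁) ≤ 0 for some h₂ in the segment [h₀,h₁], then T_C(y⁰,y¹) = T̄_C(y⁰,y¹) = ∞; in particular y¹ is not reachable from y⁰ under the state constraint C. -/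
/-!
Since `dim H = 1`, `H` is spanned by `d = h₁ - h₀`, and `s(h₂, h₀, h₁) ≤ 0` says that
`⟪d, F x⟫ ≤ 0` on the slice `{⟪d, x⟫ = c} ∩ C`, where `c = ⟪d, h₂⟫`. Convexity of `C`, the Lipschitz
bound on `F` and points of `C` strictly on both sides of the slice (which exist because `y⁰, y¹`
are interior) upgrade this to `⟪d, F x⟫ ≤ K |⟪d, x⟫ - c|` on `C`. Along an admissible trajectory,
controlled or of the reduced inclusion, the control drops out of `⟪d, ẏ⟫`, so `g = ⟪d, y⟫ - c`
satisfies `g' ≤ K |g|` with `g 0 ≤ 0 ≤ g T`. By Gronwall, `g 0 ≤ 0` forces `g T ≤ 0`, and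
backwards in time `g T ≥ 0` forces `g 0 ≥ 0`; so `⟪d, y⁰⟫ = ⟪d, y¹⟫`, although their difference
is `‖d‖² > 0`.
-/

noncomputable section
open MeasureTheory Set RealInnerProductSpace
open scoped ENNReal

/-- `s(h, h₀, h₁) = sup ⟨F_H((h + H^⊥) ∩ C), h₁ - h₀⟩ / |h₁ - h₀|`. -/
noncomputable def sFun {n : ℕ} (F : Euc n → Euc n) (H : Submodule ℝ (Euc n))
    (C : Set (Euc n)) (h h0 h1 : Euc n) : ℝ :=
  sSup ((fun x => ⟪projS H (F x), h1 - h0⟫) ''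
      (((fun w => h + w) '' (Hᗮ : Set (Euc n))) ∩ C)) / ‖h1 - h0‖

/-- The line integral `∫_{h ∈ [h₀,h₁]} dh / s(h, h₀, h₁)`. -/
noncomputable def lineIntS {n : ℕ} (F : Euc n → Euc n) (H : Submodule ℝ (Euc n))
    (C : Set (Euc n)) (h0 h1 : Euc n) : ℝ :=
  ∫ v in (0:ℝ)..‖h1 - h0‖, (sFun F H C (h0 + (v / ‖h1 - h0‖) • (h1 - h0)) h0 h1)⁻¹

/-- `C` has a `C¹` smooth boundary: near each boundary point, `C` coincides with the
sublevel set of a `C¹` defining function with nonvanishing derivative. -/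
def HasC1Boundary {n : ℕ} (C : Set (Euc n)) : Prop :=
  ∀ x ∈ frontier C, ∃ f : Euc n → ℝ, ContDiffAt ℝ 1 f x ∧ fderiv ℝ f x ≠ 0 ∧
    ∀ᶠ y in nhds x, (y ∈ C ↔ f y ≤ 0)


open intervalIntegral Filter Topology

def IsPrimitiveOn {E : Type*} [NormedAddCommGroup E] [NormedSpace ℝ E] (g w : ℝ → E)
    (a b : ℝ) : Prop :=
  IntervalIntegrable w volume a b ∧ ∀ t ∈ Icc a b, g t = g a + ∫ s in a..t, w s

lemma ae_restrict_Icc_comp_reflect {p : ℝ → Prop} {a b : ℝ}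
    (h : ∀ᵐ s ∂volume.restrict (Icc a b), p s) :
    ∀ᵐ s ∂volume.restrict (Icc a b), p (a + b - s) := by
  rw [ae_restrict_iff' measurableSet_Icc] at h ⊢
  filter_upwards [(Measure.measurePreserving_sub_left volume (a + b)).quasiMeasurePreserving.ae h]
    with s hs hsI
  exact hs ⟨by linarith [hsI.2], by linarith [hsI.1]⟩

namespace IsPrimitiveOn

section

variable {E : Type*} [NormedAddCommGroup E] [NormedSpace ℝ E] {g w : ℝ → E} {a b : ℝ}

lemma intervalIntegrable_of_mem (hg : IsPrimitiveOn g w a b) {s t : ℝ} (hs : s ∈ Icc a b)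
    (ht : t ∈ Icc a b) : IntervalIntegrable w volume s t :=
  hg.1.mono_set (uIcc_subset_uIcc (Icc_subset_uIcc hs) (Icc_subset_uIcc ht))

lemma continuousOn (hg : IsPrimitiveOn g w a b) : ContinuousOn g (Icc a b) :=
  (continuousOn_const.add ((continuousOn_primitive_interval' hg.1 left_mem_uIcc).mono
    Icc_subset_uIcc)).congr hg.2

lemma mono_left (hg : IsPrimitiveOn g w a b) {a' : ℝ} (ha' : a' ∈ Icc a b) :
    IsPrimitiveOn g w a' b := by
  have ha : a ∈ Icc a b := left_mem_Icc.2 (ha'.1.trans ha'.2)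
  refine ⟨hg.intervalIntegrable_of_mem ha' (right_mem_Icc.2 ha.2), fun t ht => ?_⟩
  have ht' : t ∈ Icc a b := ⟨ha'.1.trans ht.1, ht.2⟩
  rw [hg.2 t ht', hg.2 a' ha', add_assoc, integral_add_adjacent_intervals
    (hg.intervalIntegrable_of_mem ha ha') (hg.intervalIntegrable_of_mem ha' ht')]

lemma neg (hg : IsPrimitiveOn g w a b) : IsPrimitiveOn (fun t => -g t) (fun t => -w t) a b :=
  ⟨hg.1.neg, fun t ht => by dsimp only; rw [hg.2 t ht, intervalIntegral.integral_neg, neg_add]⟩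

lemma comp_reflect (hg : IsPrimitiveOn g w a b) :
    IsPrimitiveOn (fun t => g (a + b - t)) (fun t => -w (a + b - t)) a b := by
  refine ⟨?_, fun t ht => ?_⟩
  · have hw := (hg.1.comp_sub_left (a + b)).symm
    rw [add_sub_cancel_left, add_sub_cancel_right] at hw
    exact hw.neg
  dsimp only
  have hs : a + b - t ∈ Icc a b := ⟨by linarith [ht.2], by linarith [ht.1]⟩
  have ha : a ∈ Icc a b := left_mem_Icc.2 (ht.1.trans ht.2)
  have hb : b ∈ Icc a b := right_mem_Icc.2 (ht.1.trans ht.2)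
  rw [intervalIntegral.integral_neg, integral_comp_sub_left (fun s => w s), add_sub_cancel_left,
    hg.2 _ hs, hg.2 b hb, ← integral_add_adjacent_intervals (hg.intervalIntegrable_of_mem ha hs)
    (hg.intervalIntegrable_of_mem hs hb)]
  abel

lemma clm_comp [CompleteSpace E] {F : Type*} [NormedAddCommGroup F] [NormedSpace ℝ F]
    [CompleteSpace F]
    (hg : IsPrimitiveOn g w a b) (L : E →L[ℝ] F) :
    IsPrimitiveOn (fun t => L (g t)) (fun t => L (w t)) a b := by
  refine ⟨⟨L.integrable_comp hg.1.1, L.integrable_comp hg.1.2⟩, fun t ht => ?_⟩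
  dsimp only
  rw [hg.2 t ht, map_add, L.intervalIntegral_comp_comm
    (hg.intervalIntegrable_of_mem (left_mem_Icc.2 (ht.1.trans ht.2)) ht)]

end

section

variable {g w : ℝ → ℝ} {a b c K : ℝ}

lemma le_of_deriv_le_mul_sub (hab : a ≤ b) (hg : IsPrimitiveOn g w a b) (hK : 0 ≤ K)
    (hw : ∀ᵐ s ∂volume.restrict (Icc a b), w s ≤ K * (g s - c)) (ha : g a ≤ c) : g b ≤ c := by
  set u : ℝ → ℝ := fun t => g t - c
  set G : ℝ → ℝ := fun t => ∫ s in a..t, u s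
  have hu : ContinuousOn u (Icc a b) := hg.continuousOn.sub continuousOn_const
  have huG : ∀ t ∈ Icc a b, u t ≤ K * G t := by
    intro t ht
    have hsub : Icc a t ⊆ Icc a b := Icc_subset_Icc_right ht.2
    calc u t = (g a - c) + ∫ s in a..t, w s := by simp only [u]; rw [hg.2 t ht]; ring
      _ ≤ 0 + ∫ s in a..t, K * u s := by
          gcongr
          · linarith
          · exact integral_mono_ae_restrict ht.1
              (hg.intervalIntegrable_of_mem (left_mem_Icc.2 hab) ht)
              (((hu.mono hsub).intervalIntegrable_of_Icc ht.1).const_mul K)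
              (ae_restrict_of_ae_restrict_of_subset hsub hw)
      _ = K * G t := by rw [zero_add, intervalIntegral.integral_const_mul]
  have hGcont : ContinuousOn G (Icc a b) :=
    (continuousOn_primitive_interval' (hu.intervalIntegrable_of_Icc hab) left_mem_uIcc).mono
      Icc_subset_uIcc
  -- `exp (-K t) * G t` is antitone because `G' = u ≤ K G`.
  have hanti : AntitoneOn (fun t => Real.exp (-K * t) * G t) (Icc a b) := by
    refine antitoneOn_of_hasDerivWithinAt_nonpos (convex_Icc a b)
      ((Real.continuous_exp.comp (continuous_const_mul (-K))).continuousOn.mul hGcont)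
      (f' := fun t => Real.exp (-K * t) * (u t - K * G t)) (fun t ht => ?_) (fun t ht => ?_)
    · rw [interior_Icc] at ht
      have hG : HasDerivAt G (u t) t := integral_hasDerivAt_right
        ((hu.mono (Icc_subset_Icc_right ht.2.le)).intervalIntegrable_of_Icc ht.1.le)
        ((hu.mono Ioo_subset_Icc_self).stronglyMeasurableAtFilter isOpen_Ioo t ht)
        (hu.continuousAt (Icc_mem_nhds ht.1 ht.2))
      exact ((((hasDerivAt_id' t).const_mul (-K)).exp.mul hG).congr_deriv
        (by ring)).hasDerivWithinAt
    · rw [interior_Icc] at ht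
      exact mul_nonpos_of_nonneg_of_nonpos (Real.exp_pos _).le
        (sub_nonpos.2 (huG t ⟨ht.1.le, ht.2.le⟩))
  have hGb : G b ≤ 0 := by
    have := hanti (left_mem_Icc.2 hab) (right_mem_Icc.2 hab) hab
    simp only [G, integral_same, mul_zero] at this
    exact nonpos_of_mul_nonpos_right this (Real.exp_pos _)
  have hub := huG b (right_mem_Icc.2 hab)
  have := mul_nonpos_of_nonneg_of_nonpos hK hGb
  simp only [u] at hub
  linarith

lemma le_of_deriv_le_mul_abs_sub (hab : a ≤ b) (hg : IsPrimitiveOn g w a b) (hK : 0 ≤ K)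
    (hw : ∀ᵐ s ∂volume.restrict (Icc a b), w s ≤ K * |g s - c|) (ha : g a ≤ c) : g b ≤ c := by
  by_contra! hb
  have hS : IsCompact {t ∈ Icc a b | g t ≤ c} :=
    isCompact_Icc.of_isClosed_subset
      (hg.continuousOn.preimage_isClosed_of_isClosed isClosed_Icc isClosed_Iic) (sep_subset _ _)
  -- On `(t₀, b]`, after the last time `t₀` with `g ≤ c`, the bound is linear.
  obtain ⟨t₀, ⟨ht₀, hgt₀⟩, hlast⟩ := hS.exists_isGreatest ⟨a, left_mem_Icc.2 hab, ha⟩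
  have hw' : ∀ᵐ s ∂volume.restrict (Icc t₀ b), w s ≤ K * (g s - c) := by
    have h := ae_restrict_of_ae_restrict_of_subset (Icc_subset_Icc_left ht₀.1) hw
    rw [← Measure.restrict_congr_set Ioc_ae_eq_Icc] at h ⊢
    filter_upwards [ae_restrict_mem measurableSet_Ioc, h] with s hs hws
    have hcs : c < g s := by
      by_contra! hgs
      exact hs.1.not_ge (hlast ⟨⟨ht₀.1.trans hs.1.le, hs.2⟩, hgs⟩)
    rwa [abs_of_pos (sub_pos.2 hcs)] at hws
  exact hb.not_ge ((hg.mono_left ht₀).le_of_deriv_le_mul_sub ht₀.2 hK hw' hgt₀)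

lemma le_left_of_deriv_le_mul_abs_sub (hab : a ≤ b) (hg : IsPrimitiveOn g w a b) (hK : 0 ≤ K)
    (hw : ∀ᵐ s ∂volume.restrict (Icc a b), w s ≤ K * |g s - c|) (hb : c ≤ g b) : c ≤ g a := by
  -- Reverse time: `t ↦ -g (a + b - t)` obeys the same inequality, with level `-c`.
  have hrev := hg.comp_reflect.neg.le_of_deriv_le_mul_abs_sub hab hK (c := -c) ?_ ?_
  · simpa using hrev
  · filter_upwards [ae_restrict_Icc_comp_reflect hw] with s hs
    rwa [neg_neg, ← neg_add', abs_neg]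
  · simpa using hb

lemma eq_of_deriv_le_mul_abs_sub (hab : a ≤ b) (hg : IsPrimitiveOn g w a b) (hK : 0 ≤ K)
    (hw : ∀ᵐ s ∂volume.restrict (Icc a b), w s ≤ K * |g s - c|) (ha : g a ≤ c) (hb : c ≤ g b) :
    g a = g b :=
  le_antisymm (ha.trans hb) <| (hg.le_of_deriv_le_mul_abs_sub hab hK hw ha).trans
    (hg.le_left_of_deriv_le_mul_abs_sub hab hK hw hb)

end

lemma inner_eq_of_inner_deriv_le_mul_abs_sub {E : Type*} [NormedAddCommGroup E]
    [InnerProductSpace ℝ E] [CompleteSpace E] {γ w : ℝ → E} {a b c K : ℝ} {d : E} (hab : a ≤ b)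
    (hγ : IsPrimitiveOn γ w a b) (hK : 0 ≤ K)
    (hw : ∀ᵐ s ∂volume.restrict (Icc a b), ⟪d, w s⟫ ≤ K * |⟪d, γ s⟫ - c|)
    (ha : ⟪d, γ a⟫ ≤ c) (hb : c ≤ ⟪d, γ b⟫) : ⟪d, γ a⟫ = ⟪d, γ b⟫ :=
  (hγ.clm_comp (innerSL ℝ d)).eq_of_deriv_le_mul_abs_sub hab hK hw ha hb

end IsPrimitiveOn

section

variable {E : Type*} [NormedAddCommGroup E] [NormedSpace ℝ E] {C : Set E} {f : E → ℝ}
  {K : NNReal} {ℓ : E →ₗ[ℝ] ℝ} {c : ℝ}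

-- Follow the segment from `x` towards `q` until it meets the level set `ℓ = c`.
lemma le_mul_sub_of_nonpos_on_level (hC : Convex ℝ C) (hCb : Bornology.IsBounded C)
    (hf : LipschitzOnWith K f C) (hlevel : ∀ x ∈ C, ℓ x = c → f x ≤ 0) {q : E} (hq : q ∈ C)
    {ε : ℝ} (hε : 0 < ε) (hcq : c + ε ≤ ℓ q) {x : E} (hx : x ∈ C) (hxc : ℓ x ≤ c) :
    f x ≤ K * Metric.diam C / ε * (c - ℓ x) := by
  have hgap : ε ≤ ℓ q - ℓ x := by linarith
  set θ := (c - ℓ x) / (ℓ q - ℓ x)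
  have hθ0 : 0 ≤ θ := div_nonneg (by linarith) (by linarith)
  have hθ1 : θ ≤ 1 := (div_le_one (by linarith)).2 (by linarith)
  have hθε : θ ≤ (c - ℓ x) / ε := div_le_div_of_nonneg_left (by linarith) hε hgap
  set x' := x + θ • (q - x)
  have hx' : x' ∈ C := hC.add_smul_sub_mem hx hq ⟨hθ0, hθ1⟩
  have hlx' : ℓ x' = c := by
    simp only [x', θ, map_add, map_smul, map_sub, smul_eq_mul]
    rw [div_mul_cancel₀ _ (by linarith)]
    ring
  have hdist : dist x x' ≤ θ * Metric.diam C := by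
    rw [dist_eq_norm, sub_add_cancel_left, norm_neg, norm_smul, Real.norm_of_nonneg hθ0,
      ← dist_eq_norm]
    exact mul_le_mul_of_nonneg_left (Metric.dist_le_diam_of_mem hCb hq hx) hθ0
  calc f x ≤ f x' + K * dist x x' := by
        linarith [le_abs_self (f x - f x'), Real.dist_eq (f x) (f x') ▸ hf.dist_le_mul x hx x' hx']
    _ ≤ 0 + K * (θ * Metric.diam C) := by gcongr; exact hlevel x' hx' hlx'
    _ ≤ K * ((c - ℓ x) / ε * Metric.diam C) := by
        rw [zero_add]; gcongr
    _ = K * Metric.diam C / ε * (c - ℓ x) := by ring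

lemma exists_le_mul_abs_sub_of_nonpos_on_level (hC : Convex ℝ C)
    (hCb : Bornology.IsBounded C) (hf : LipschitzOnWith K f C)
    (hlevel : ∀ x ∈ C, ℓ x = c → f x ≤ 0) {p q : E} (hp : p ∈ C) (hq : q ∈ C) (hpc : ℓ p < c)
    (hcq : c < ℓ q) : ∃ M, 0 ≤ M ∧ ∀ x ∈ C, f x ≤ M * |ℓ x - c| := by
  set ε := min (c - ℓ p) (ℓ q - c)
  have hε : 0 < ε := lt_min (by linarith) (by linarith)
  refine ⟨K * Metric.diam C / ε, by have := Metric.diam_nonneg (s := C); positivity,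
    fun x hx => ?_⟩
  rcases le_total (ℓ x) c with hxc | hxc
  · rw [abs_of_nonpos (sub_nonpos.2 hxc), neg_sub]
    exact le_mul_sub_of_nonpos_on_level hC hCb hf hlevel hq hε
      (by linarith [min_le_right (c - ℓ p) (ℓ q - c)]) hx hxc
  · rw [abs_of_nonneg (sub_nonneg.2 hxc)]
    have hlevel' : ∀ y ∈ C, (-ℓ) y = -c → f y ≤ 0 := fun y hy hyc =>
      hlevel y hy (by simpa using hyc)
    have := le_mul_sub_of_nonpos_on_level hC hCb hf hlevel' hp hε
      (by simp only [LinearMap.neg_apply]; linarith [min_le_left (c - ℓ p) (ℓ q - c)]) hx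
      (by simpa using hxc)
    simpa [sub_eq_neg_add, add_comm] using this

end

section

variable {E : Type*} [NormedAddCommGroup E] [InnerProductSpace ℝ E]

lemma exists_inner_lt_of_mem_interior {s : Set E} {x v : E} (hx : x ∈ interior s) (hv : v ≠ 0) :
    ∃ p ∈ s, ⟪v, p⟫ < ⟪v, x⟫ := by
  have hnear : ∀ᶠ r in 𝓝[>] (0 : ℝ), x - r • v ∈ s := by
    refine nhdsWithin_le_nhds (Tendsto.eventually ?_ (mem_interior_iff_mem_nhds.1 hx))
    exact Continuous.tendsto' (by fun_prop) 0 x (by simp)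
  obtain ⟨r, hr, hr0⟩ := (hnear.and self_mem_nhdsWithin).exists
  refine ⟨_, hr, ?_⟩
  rw [inner_sub_right, real_inner_smul_right, sub_lt_self_iff]
  exact mul_pos hr0 (real_inner_self_pos.2 hv)

lemma exists_inner_le_mul_abs_sub_of_mem_interior {F : E → E} {L : NNReal} {C : Set E}
    {d y0 y1 : E} {c : ℝ}
    (hC : Convex ℝ C) (hCb : Bornology.IsBounded C) (hF : LipschitzOnWith L F C)
    (hlevel : ∀ x ∈ C, ⟪d, x⟫ = c → ⟪d, F x⟫ ≤ 0) (hd : d ≠ 0) (hy0 : y0 ∈ interior C)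
    (hy1 : y1 ∈ interior C) (h0 : ⟪d, y0⟫ ≤ c) (h1 : c ≤ ⟪d, y1⟫) :
    ∃ K, 0 ≤ K ∧ ∀ x ∈ C, ⟪d, F x⟫ ≤ K * |⟪d, x⟫ - c| := by
  obtain ⟨p, hpC, hp⟩ := exists_inner_lt_of_mem_interior hy0 hd
  obtain ⟨q, hqC, hq⟩ := exists_inner_lt_of_mem_interior hy1 (neg_ne_zero.2 hd)
  simp only [inner_neg_left, neg_lt_neg_iff] at hq
  exact exists_le_mul_abs_sub_of_nonpos_on_level (ℓ := innerₛₗ ℝ d) (f := fun x => ⟪d, F x⟫)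
    hC hCb ((innerSL ℝ d).lipschitz.comp_lipschitzOnWith hF) hlevel hpC hqC
    (by simpa using hp.trans_le h0) (by simpa using h1.trans_lt hq)

lemma inner_sub_mem_Icc_of_mem_segment {x y z : E} (hz : z ∈ segment ℝ x y) :
    ⟪y - x, z⟫ ∈ Icc ⟪y - x, x⟫ ⟪y - x, y⟫ := by
  have hle : ⟪y - x, x⟫ ≤ ⟪y - x, y⟫ := by
    rw [← sub_nonneg, ← inner_sub_right]; exact real_inner_self_nonneg
  have := mem_image_of_mem (innerₛₗ ℝ (y - x)).toAffineMap hz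
  rw [image_segment] at this
  simp only [LinearMap.coe_toAffineMap, innerₛₗ_apply_apply] at this
  rwa [segment_eq_Icc hle] at this

end

lemma orthogonal_range_eq_span_singleton {E F : Type*} [NormedAddCommGroup E]
    [InnerProductSpace ℝ E] [NormedAddCommGroup F] [InnerProductSpace ℝ F] [FiniteDimensional ℝ F]
    {B : E →ₗ[ℝ] F} (hB : Function.Injective B)
    (hdim : Module.finrank ℝ F = Module.finrank ℝ E + 1) {d : F} (hd : d ∈ (LinearMap.range B)ᗮ)
    (hd0 : d ≠ 0) : (LinearMap.range B)ᗮ = ℝ ∙ d := by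
  refine eq_span_singleton_of_mem_of_finrank_eq_one ?_ hd hd0
  have := (LinearMap.range B).finrank_add_finrank_orthogonal
  rw [LinearMap.finrank_range_of_inj hB] at this
  omega

section

variable {n : ℕ} {F : Euc n → Euc n} {H : Submodule ℝ (Euc n)} {C : Set (Euc n)}

lemma inner_projS_of_mem {d : Euc n} (hd : d ∈ H) (x : Euc n) : ⟪d, projS H x⟫ = ⟪d, x⟫ := by
  rw [projS, ← Submodule.starProjection_apply, ← Submodule.inner_starProjection_left_eq_right,
    Submodule.starProjection_eq_self_iff.2 hd]

lemma inner_le_zero_of_sFun_nonpos {h h0 h1 x : Euc n} (hFC : Bornology.IsBounded (F '' C))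
    (hd : h1 - h0 ∈ H) (hs : sFun F H C h h0 h1 ≤ 0) (hx : x ∈ C) (hxh : x - h ∈ Hᗮ) :
    ⟪h1 - h0, F x⟫ ≤ 0 := by
  rcases eq_or_ne (h1 - h0) 0 with hd0 | hd0
  · simp [hd0]
  have hproj : ∀ y, ⟪projS H y, h1 - h0⟫ = ⟪h1 - h0, y⟫ := fun y => by
    rw [real_inner_comm, inner_projS_of_mem hd]
  rw [sFun, div_le_iff₀ (norm_pos_iff.2 hd0), zero_mul] at hs
  simp_rw [hproj] at hs
  obtain ⟨R, hR⟩ := hFC.subset_closedBall 0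
  have hxS : ⟪h1 - h0, F x⟫ ∈
      (fun y => ⟪h1 - h0, F y⟫) '' ((fun w => h + w) '' (Hᗮ : Set (Euc n)) ∩ C) :=
    ⟨x, ⟨⟨x - h, hxh, add_sub_cancel h x⟩, hx⟩, rfl⟩
  refine (le_csSup ⟨R * ‖h1 - h0‖, ?_⟩ hxS).trans hs
  rintro _ ⟨y, ⟨-, hy⟩, rfl⟩
  have hFy : ‖F y‖ ≤ R := mem_closedBall_zero_iff.1 (hR (mem_image_of_mem F hy))
  calc ⟪h1 - h0, F y⟫ ≤ ‖h1 - h0‖ * ‖F y‖ := real_inner_le_norm _ _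
    _ ≤ R * ‖h1 - h0‖ := by rw [mul_comm]; gcongr

end

section

variable {n : ℕ} {F : Euc n → Euc n} {C : Set (Euc n)} {y0 y1 d : Euc n} {K c : ℝ}

lemma ctrlTimes_eq_empty_of_inner_le_mul_abs_sub {m : ℕ} {B : Euc m →ₗ[ℝ] Euc n} (hK : 0 ≤ K)
    (hdB : ∀ v, ⟪d, B v⟫ = 0) (hFC : ∀ x ∈ C, ⟪d, F x⟫ ≤ K * |⟪d, x⟫ - c|)
    (h0 : ⟪d, y0⟫ ≤ c) (h1 : c ≤ ⟪d, y1⟫) (hlt : ⟪d, y0⟫ < ⟪d, y1⟫) :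
    ctrlTimes F B C y0 y1 = ∅ := by
  refine eq_empty_iff_forall_notMem.2 ?_
  rintro T ⟨hT, u, y, -, -, -, hint, hrep, hmem, hy0, hyT⟩
  have hy : IsPrimitiveOn y (fun s => F (y s) + B (u s)) 0 T := ⟨hint, by rwa [hy0]⟩
  have hw : ∀ᵐ s ∂volume.restrict (Icc 0 T), ⟪d, F (y s) + B (u s)⟫ ≤ K * |⟪d, y s⟫ - c| := by
    filter_upwards [ae_restrict_mem measurableSet_Icc] with s hs
    rw [inner_add_right, hdB, add_zero]
    exact hFC _ (hmem s hs)
  have := hy.inner_eq_of_inner_deriv_le_mul_abs_sub hT.le hK hw (by rwa [hy0]) (by rwa [hyT])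
  rw [hy0, hyT] at this
  exact hlt.ne this

lemma slowTimes_eq_empty_of_inner_le_mul_abs_sub {H : Submodule ℝ (Euc n)} (hK : 0 ≤ K)
    (hdH : d ∈ H) (hFC : ∀ x ∈ C, ⟪d, F x⟫ ≤ K * |⟪d, x⟫ - c|)
    (h0 : ⟪d, y0⟫ ≤ c) (h1 : c ≤ ⟪d, y1⟫) (hlt : ⟪d, y0⟫ < ⟪d, y1⟫) :
    slowTimes F H C y0 y1 = ∅ := by
  refine eq_empty_iff_forall_notMem.2 ?_
  rintro T ⟨hT, z, v, hint, hrep, hmem, hzT⟩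
  have hz0 : z 0 = projS H y0 := by simpa using hrep 0 (left_mem_Icc.2 hT.le)
  have hz : IsPrimitiveOn z v 0 T := ⟨hint, by rwa [hz0]⟩
  have hw : ∀ᵐ s ∂volume.restrict (Icc 0 T), ⟪d, v s⟫ ≤ K * |⟪d, z s⟫ - c| := by
    filter_upwards [hmem] with s hs
    obtain ⟨x, ⟨⟨x', hx', rfl⟩, hxC⟩, hvs⟩ := hs
    have hdx' : ⟪d, x'⟫ = 0 := Submodule.inner_right_of_mem_orthogonal hdH hx'
    rw [← hvs, inner_projS_of_mem hdH]
    simpa [inner_add_right, hdx'] using hFC _ hxC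
  have := hz.inner_eq_of_inner_deriv_le_mul_abs_sub hT.le hK hw
    (by rwa [hz0, inner_projS_of_mem hdH]) (by rwa [hzT, inner_projS_of_mem hdH])
  rw [hz0, hzT, inner_projS_of_mem hdH, inner_projS_of_mem hdH] at this
  exact hlt.ne this

end

theorem minTime_eq_top_of_sFun_nonpos_general {n m : ℕ} (hnm : n = m + 1)
    (F : Euc n → Euc n) (L_F : ℝ) (hF : LipschitzWith L_F.toNNReal F)
    (B : Euc m →ₗ[ℝ] Euc n) (hB : Function.Injective B)
    (C : Set (Euc n)) (hconv : Convex ℝ C) (hbdd : Bornology.IsBounded C)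
    (y0 y1 : Euc n) (hy0 : y0 ∈ interior C) (hy1 : y1 ∈ interior C)
    (h0 h1 : Euc n) (hh0 : h0 = projS (LinearMap.range B)ᗮ y0)
    (hh1 : h1 = projS (LinearMap.range B)ᗮ y1) (hne : h0 ≠ h1)
    (h2 : Euc n) (hh2 : h2 ∈ segment ℝ h0 h1)
    (hs : sFun F (LinearMap.range B)ᗮ C h2 h0 h1 ≤ 0) :
    minTime F B C y0 y1 = ⊤ ∧ slowTime F (LinearMap.range B)ᗮ C y0 y1 = ⊤ := by
  set H := (LinearMap.range B)ᗮ
  set d := h1 - h0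
  have hd : d ≠ 0 := sub_ne_zero.2 hne.symm
  have hdH : d ∈ H :=
    H.sub_mem (by rw [hh1]; exact SetLike.coe_mem _) (by rw [hh0]; exact SetLike.coe_mem _)
  have hH : H = ℝ ∙ d := orthogonal_range_eq_span_singleton hB (by simp [hnm]) hdH hd
  have hy0d : ⟪d, y0⟫ = ⟪d, h0⟫ := by rw [hh0, inner_projS_of_mem hdH]
  have hy1d : ⟪d, y1⟫ = ⟪d, h1⟫ := by rw [hh1, inner_projS_of_mem hdH]
  have hlt : ⟪d, h0⟫ < ⟪d, h1⟫ := by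
    rw [← sub_pos, ← inner_sub_right]; exact real_inner_self_pos.2 hd
  obtain ⟨h2lo, h2hi⟩ := inner_sub_mem_Icc_of_mem_segment hh2
  have hlevel : ∀ x ∈ C, ⟪d, x⟫ = ⟪d, h2⟫ → ⟪d, F x⟫ ≤ 0 := fun x hx hxc =>
    inner_le_zero_of_sFun_nonpos (hF.isBounded_image hbdd) hdH hs hx <| by
      rw [hH, Submodule.mem_orthogonal_singleton_iff_inner_right, inner_sub_right, hxc, sub_self]
  obtain ⟨K, hK, hFK⟩ := exists_inner_le_mul_abs_sub_of_mem_interior hconv hbdd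
    hF.lipschitzOnWith hlevel hd hy0 hy1 (hy0d ▸ h2lo) (hy1d ▸ h2hi)
  have hdB : ∀ v, ⟪d, B v⟫ = 0 := fun v =>
    Submodule.inner_left_of_mem_orthogonal (LinearMap.mem_range_self B v) hdH
  constructor
  · rw [minTime, ctrlTimes_eq_empty_of_inner_le_mul_abs_sub hK hdB hFK (by linarith)
      (by linarith) (by linarith), image_empty, sInf_empty]
  · rw [slowTime, slowTimes_eq_empty_of_inner_le_mul_abs_sub hK hdH hFK (by linarith)
      (by linarith) (by linarith), image_empty, sInf_empty]

/-- Theorem 1 (ii) of the paper.  Let `dim H = 1` (i.e. `m = n - 1`),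
`C` a bounded convex set with `C¹` smooth boundary, `F` Lipschitz, `y⁰, y¹ ∈ C°`, and
`h₀ = P_H y⁰ ≠ h₁ = P_H y¹`.  If `s(h₂, h₀, h₁) ≤ 0` for some `h₂` in the segment
`[h₀, h₁]`, then `T_C(y⁰,y¹) = T̄_C(y⁰,y¹) = ∞`; in particular `y¹` is not reachable
from `y⁰` under the state constraint `C`. -/
theorem minTime_eq_top_of_sFun_nonpos {n m : ℕ} (hnm : n = m + 1)
    (F : Euc n → Euc n) (L_F : ℝ) (hLF : 0 < L_F) (hF : LipschitzWith L_F.toNNReal F)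
    (B : Euc m →ₗ[ℝ] Euc n) (hB : Function.Injective B)
    (C : Set (Euc n)) (hconv : Convex ℝ C) (hbdd : Bornology.IsBounded C)
    (hbdry : HasC1Boundary C)
    (y0 y1 : Euc n) (hy0 : y0 ∈ interior C) (hy1 : y1 ∈ interior C)
    (h0 h1 : Euc n) (hh0 : h0 = projS (LinearMap.range B)ᗮ y0)
    (hh1 : h1 = projS (LinearMap.range B)ᗮ y1) (hne : h0 ≠ h1)
    (h2 : Euc n) (hh2 : h2 ∈ segment ℝ h0 h1)
    (hs : sFun F (LinearMap.range B)ᗮ C h2 h0 h1 ≤ 0) :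
    minTime F B C y0 y1 = ⊤ ∧ slowTime F (LinearMap.range B)ᗮ C y0 y1 = ⊤ :=
  minTime_eq_top_of_sFun_nonpos_general hnm F L_F hF B hB C hconv hbdd y0 y1 hy0 hy1 h0 h1 hh0 hh1
    hne h2 hh2 hs
end
end

section
/- For all y⁰, y¹ in the interior C° of C, the minimal controllability time is bounded above by the pliable controllability time: T_C(y⁰,y¹) ≤ T̃_C(y⁰,y¹). -/
noncomputable section
open MeasureTheory Set RealInnerProductSpace
open scoped ENNReal

/-- `b` is reachable from `a` under the state constraint `C` within time `τ`. -/
def ReachWithin {n m : ℕ} (F : Euc n → Euc n) (B : Euc m →ₗ[ℝ] Euc n)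
    (C : Set (Euc n)) (a b : Euc n) (τ : ℝ) : Prop :=
  ∃ T ∈ ctrlTimes F B C a b, T ≤ τ

/-- A solution `(z, h⊥)` of the auxiliary system `ż(t) = F_H(z(t) + h⊥(t))`,
`z(t) + h⊥(t) ∈ C`, on `[0, T]`, steering `P_H y0` to `P_H y1`. -/
def HatSol {n : ℕ} (F : Euc n → Euc n) (H : Submodule ℝ (Euc n)) (C : Set (Euc n))
    (y0 y1 : Euc n) (T : ℝ) (z hp : ℝ → Euc n) : Prop :=
  Measurable hp ∧ (∀ t, hp t ∈ Hᗮ) ∧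
  IntervalIntegrable (fun s => projS H (F (z s + hp s))) volume 0 T ∧
  (∀ t ∈ Icc (0:ℝ) T, z t = projS H y0 + ∫ s in (0:ℝ)..t, projS H (F (z s + hp s))) ∧
  (∀ t ∈ Icc (0:ℝ) T, z t + hp t ∈ C) ∧
  z T = projS H y1

/-- Definition 1 of the paper: the solution `(z, hp)` on `[0, T]` with target `y1`
is *pliable*. -/
def Pliable {n m : ℕ} (F : Euc n → Euc n) (B : Euc m →ₗ[ℝ] Euc n) (C : Set (Euc n))
    (y1 : Euc n) (T : ℝ) (z hp : ℝ → Euc n) : Prop :=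
  ∃ τ : ℝ → ℝ → ℝ,
    -- (i): small perturbations along the trajectory preserve approximate reachability
    (∀ t1 t2 : ℝ, 0 ≤ t1 → t1 < t2 → t2 ≤ T →
      0 < τ t1 t2 ∧ ∃ ε0 > (0:ℝ), ∀ ε : ℝ, 0 < ε → ε ≤ ε0 → ∃ δ > (0:ℝ),
        ∀ ya ∈ Metric.closedBall (z t1 + hp t1) δ ∩ interior C,
          ∃ yb ∈ Metric.closedBall (z t2 + hp t2) ε ∩ interior C,
            ReachWithin F B C ya yb (τ t1 t2)) ∧
    -- (ii): near the terminal time, `y1` is reachable quickly from a neighbourhood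
    (∃ δ : ℝ → ℝ, ∃ t0 : ℝ, t0 < T ∧
      (∀ t : ℝ, t0 ≤ t → t < T → 0 < δ t ∧
        ∀ y ∈ Metric.closedBall (z t + hp t) (δ t) ∩ interior C,
          minTime F B C y y1 ≠ ⊤) ∧
      (∀ ε > (0:ℝ), ∃ t1 : ℝ, t0 ≤ t1 ∧ t1 < T ∧ ∀ t : ℝ, t1 ≤ t → t < T →
        ∀ y ∈ Metric.closedBall (z t + hp t) (δ t) ∩ interior C,
          minTime F B C y y1 ≤ ENNReal.ofReal ε)) ∧
    -- (iii): limsup_{Δt → 0} sup_{t ∈ [0, T - Δt]} τ(t, t + Δt) / Δt ≤ 1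
    (∀ c > (1:ℝ), ∃ Δ0 > (0:ℝ), ∀ Δt : ℝ, 0 < Δt → Δt ≤ Δ0 →
      ∀ t : ℝ, 0 ≤ t → t ≤ T - Δt → τ t (t + Δt) ≤ c * Δt)

/-- The pliable controllability time `T̃_C(y0, y1)` (with `inf ∅ = ∞`). -/
noncomputable def tildeTime {n m : ℕ} (F : Euc n → Euc n) (B : Euc m →ₗ[ℝ] Euc n)
    (C : Set (Euc n)) (y0 y1 : Euc n) : ℝ≥0∞ :=
  sInf (ENNReal.ofReal ''
    {T | 0 < T ∧ ∃ z hp : ℝ → Euc n,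
      HatSol F (LinearMap.range B)ᗮ C y0 y1 T z hp ∧ Pliable F B C y1 T z hp})

/-! Write `x = z + h⊥` for a pliable solution on `[0, T]`. Since `x(0) - y⁰ ∈ ran B`, a large
constant control moves `y⁰` near `x(0)` in arbitrarily short time, the drift `F` being negligible
over a short horizon. Chaining condition (i) backwards along a uniform grid of `[0, t]` then steers
points near `x(0)` to points near `x(t)`, each step costing at most `c > 1` times the mesh by (iii),
and condition (ii) reaches `y¹` from near `x(t)`, for `t` close to `T`, in arbitrarily short time.
So every `T + η`, `η > 0`, is an admissible time. -/

open Metric Filter Topology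
open scoped NNReal

section Concatenation

variable {E : Type*} {T₁ T₂ t : ℝ} {f g : ℝ → E}

def concatAt (T₁ : ℝ) (f g : ℝ → E) (t : ℝ) : E :=
  if t ≤ T₁ then f t else g (t - T₁)

lemma concatAt_of_le (h : t ≤ T₁) : concatAt T₁ f g t = f t := if_pos h

lemma concatAt_of_lt (h : T₁ < t) : concatAt T₁ f g t = g (t - T₁) := if_neg h.not_ge

lemma Measurable.concatAt [MeasurableSpace E] (hf : Measurable f) (hg : Measurable g) :
    Measurable (concatAt T₁ f g) :=
  Measurable.ite measurableSet_Iic hf (hg.comp (measurable_id.sub_const T₁))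

lemma mapsTo_concatAt {s : Set E} (hf : MapsTo f (Icc 0 T₁) s) (hg : MapsTo g (Icc 0 T₂) s) :
    MapsTo (concatAt T₁ f g) (Icc 0 (T₁ + T₂)) s := by
  intro t ht
  rcases le_or_gt t T₁ with h | h
  · rw [concatAt_of_le h]; exact hf ⟨ht.1, h⟩
  · rw [concatAt_of_lt h]; exact hg ⟨by linarith, by linarith [ht.2]⟩

lemma ContinuousOn.concatAt [TopologicalSpace E] (hf : ContinuousOn f (Icc 0 T₁))
    (hg : ContinuousOn g (Icc 0 T₂)) (hfg : f T₁ = g 0) :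
    ContinuousOn (concatAt T₁ f g) (Icc 0 (T₁ + T₂)) := by
  refine ContinuousOn.if (fun t ht => ?_) ?_ ?_
  · have ht' : t ∈ frontier (Iic T₁) := ht.2
    rw [frontier_Iic, mem_singleton_iff] at ht'
    simp [ht', hfg]
  · rw [show {t : ℝ | t ≤ T₁} = Iic T₁ from rfl, closure_Iic]
    exact hf.mono fun t ht => ⟨ht.1.1, ht.2⟩
  · rw [show {t : ℝ | ¬t ≤ T₁} = Ioi T₁ by ext; simp, closure_Ioi]
    refine hg.comp (continuousOn_id.sub continuousOn_const) fun t ht => ?_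
    exact ⟨sub_nonneg.2 ht.2, by linarith [ht.1.2]⟩

variable [NormedAddCommGroup E]

lemma intervalIntegrable_concatAt_left {a : ℝ} (hf : IntervalIntegrable f volume a T₁)
    (ha : a ≤ T₁) : IntervalIntegrable (concatAt T₁ f g) volume a T₁ :=
  hf.congr fun s hs => by
    rw [uIoc_of_le ha] at hs
    exact (concatAt_of_le hs.2).symm

lemma intervalIntegrable_concatAt_right (hg : IntervalIntegrable g volume 0 T₂)
    (ht : T₁ ≤ t) (htT : t ≤ T₁ + T₂) : IntervalIntegrable (concatAt T₁ f g) volume T₁ t := by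
  have hg' : IntervalIntegrable g volume 0 (t - T₁) := hg.mono_set (by
    rw [uIcc_of_le (sub_nonneg.2 ht), uIcc_of_le (by linarith)]
    exact Icc_subset_Icc_right (by linarith))
  have hshift := hg'.comp_sub_right T₁
  rw [zero_add, sub_add_cancel] at hshift
  refine hshift.congr fun s hs => ?_
  rw [uIoc_of_le ht] at hs
  exact (concatAt_of_lt hs.1).symm

variable [NormedSpace ℝ E]

lemma integral_concatAt_right (ht : T₁ ≤ t) :
    ∫ s in T₁..t, concatAt T₁ f g s = ∫ s in (0:ℝ)..(t - T₁), g s := by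
  rw [← sub_self T₁, ← intervalIntegral.integral_comp_sub_right]
  refine intervalIntegral.integral_congr_ae (ae_of_all _ fun s hs => ?_)
  rw [uIoc_of_le ht] at hs
  exact concatAt_of_lt hs.1

lemma concatAt_eq_add_integral [CompleteSpace E] {y₁ y₂ g₁ g₂ : ℝ → E} {a : E} (hT₁ : 0 ≤ T₁)
    (hg₁ : IntervalIntegrable g₁ volume 0 T₁) (hg₂ : IntervalIntegrable g₂ volume 0 T₂)
    (hy₁ : ∀ t ∈ Icc 0 T₁, y₁ t = a + ∫ s in (0:ℝ)..t, g₁ s)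
    (hy₂ : ∀ t ∈ Icc 0 T₂, y₂ t = y₁ T₁ + ∫ s in (0:ℝ)..t, g₂ s) :
    ∀ t ∈ Icc 0 (T₁ + T₂), concatAt T₁ y₁ y₂ t = a + ∫ s in (0:ℝ)..t, concatAt T₁ g₁ g₂ s := by
  intro t ht
  rcases le_or_gt t T₁ with h | h
  · rw [concatAt_of_le h, hy₁ t ⟨ht.1, h⟩, intervalIntegral.integral_congr fun s hs => ?_]
    rw [uIcc_of_le ht.1] at hs
    exact (concatAt_of_le (hs.2.trans h)).symm
  · rw [concatAt_of_lt h, hy₂ (t - T₁) ⟨by linarith, by linarith [ht.2]⟩, hy₁ T₁ ⟨hT₁, le_rfl⟩,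
      ← intervalIntegral.integral_add_adjacent_intervals (intervalIntegrable_concatAt_left hg₁ hT₁)
        (intervalIntegrable_concatAt_right hg₂ h.le ht.2),
      integral_concatAt_right h.le, add_assoc]
    congr 2
    refine intervalIntegral.integral_congr fun s hs => ?_
    rw [uIcc_of_le hT₁] at hs
    exact (concatAt_of_le hs.2).symm

end Concatenation

/-- By Grönwall, the solution stays close to the straight line `y₀ + (t / T) • d`: the line solves
the equation up to an error bounded by `sup ‖F‖` near `y₀`, uniformly in `T`. -/
lemma eventually_exists_hasDerivWithinAt_near_line {E : Type*} [NormedAddCommGroup E]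
    [NormedSpace ℝ E] [CompleteSpace E] {F : E → E} {K : ℝ≥0} (hF : LipschitzWith K F)
    (y₀ d : E) {ρ : ℝ} (hρ : 0 < ρ) :
    ∀ᶠ T in 𝓝[>] 0, ∃ y : ℝ → E, y 0 = y₀ ∧
      (∀ t ∈ Icc 0 T, HasDerivWithinAt y (F (y t) + T⁻¹ • d) (Icc 0 T) t) ∧
      ∀ t ∈ Icc 0 T, dist (y t) (y₀ + (t / T) • d) < ρ := by
  set M := ‖F y₀‖ + K * (‖d‖ + 1)
  have hM₀ : 0 ≤ M := by positivity
  have hM : ∀ x ∈ closedBall y₀ (‖d‖ + 1), ‖F x‖ ≤ M := fun x hx =>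
    norm_le_norm_add_const_of_dist_le
      ((hF.dist_le_mul x y₀).trans (by gcongr; exact mem_closedBall.1 hx))
  have hsmall : ∀ᶠ T in 𝓝 (0:ℝ), M * T < 1 ∧ gronwallBound 0 K M T < ρ :=
    ((continuous_const.mul continuous_id).continuousAt.eventually_lt continuousAt_const
        (by simp)).and
      ((hasDerivAt_gronwallBound 0 K M 0).continuousAt.eventually_lt continuousAt_const
        (by rwa [gronwallBound_x0]))
  filter_upwards [self_mem_nhdsWithin, nhdsWithin_le_nhds hsmall] with T hT ⟨hMT, hgron⟩
  have hT : 0 < T := hT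
  have hline : ∀ t ∈ Icc 0 T, ‖(t / T) • d‖ ≤ ‖d‖ := fun t ht => by
    rw [norm_smul, Real.norm_of_nonneg (div_nonneg ht.1 hT.le)]
    exact mul_le_of_le_one_left (norm_nonneg d) ((div_le_one hT).2 ht.2)
  have hPL : IsPicardLindelof (fun _ x => F x + T⁻¹ • d) (tmin := 0) (tmax := T)
      ⟨0, left_mem_Icc.2 hT.le⟩ y₀ ⟨‖d‖ + 1, by positivity⟩ 0
      ⟨M + T⁻¹ * ‖d‖, by positivity⟩ K := by
    refine IsPicardLindelof.of_time_independent (fun x hx => ?_)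
      (by simpa using (hF.add (LipschitzWith.const (T⁻¹ • d))).lipschitzOnWith) ?_
    · calc ‖F x + T⁻¹ • d‖ ≤ ‖F x‖ + ‖T⁻¹ • d‖ := norm_add_le _ _
        _ ≤ M + T⁻¹ * ‖d‖ := by
          rw [norm_smul, Real.norm_of_nonneg (inv_nonneg.2 hT.le)]
          exact add_le_add_left (hM x hx) _
    · simp only [sub_zero, max_eq_left hT.le, NNReal.coe_zero]
      change (M + T⁻¹ * ‖d‖) * T ≤ ‖d‖ + 1
      rw [add_mul, mul_right_comm, inv_mul_cancel₀ hT.ne', one_mul]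
      linarith
  obtain ⟨y, hy₀, hy⟩ := hPL.exists_eq_forall_mem_Icc_hasDerivWithinAt₀
  refine ⟨y, hy₀, hy, fun t ht => ?_⟩
  have hline_deriv : ∀ t, HasDerivAt (fun t => y₀ + (t / T) • d) (T⁻¹ • d) t := fun t => by
    simpa using ((hasDerivAt_id t).div_const T).smul_const d |>.const_add y₀
  have hcmp := dist_le_of_approx_trajectories_ODE (v := fun _ x => F x + T⁻¹ • d) (δ := 0)
    (εf := 0) (εg := M) (fun _ => by simpa using hF.add (LipschitzWith.const (T⁻¹ • d)))
    (fun t ht => (hy t ht).continuousWithinAt)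
    (fun t ht => (hy t (Ico_subset_Icc_self ht)).mono_of_mem_nhdsWithin
      (Icc_mem_nhdsGE_of_mem ht))
    (fun t _ => by simp)
    (fun t _ => (hline_deriv t).continuousAt.continuousWithinAt)
    (fun t _ => (hline_deriv t).hasDerivWithinAt)
    (fun t ht => by
      rw [dist_comm, dist_eq_norm, add_sub_cancel_right]
      exact hM _ (by
        rw [mem_closedBall, dist_eq_norm, add_sub_cancel_left]
        linarith [hline t (Ico_subset_Icc_self ht)]))
    (by simp [hy₀]) t ht
  rw [zero_add, sub_zero] at hcmp
  exact hcmp.trans_lt ((gronwallBound_mono le_rfl hM₀ K.2 ht.2).trans_lt hgron)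

section ControlSystem

variable {n m : ℕ} {F : Euc n → Euc n} {B : Euc m →ₗ[ℝ] Euc n} {C : Set (Euc n)}
  {a b c : Euc n} {τ τ₁ τ₂ : ℝ}

lemma add_mem_ctrlTimes {T₁ T₂ : ℝ} (h₁ : T₁ ∈ ctrlTimes F B C a b)
    (h₂ : T₂ ∈ ctrlTimes F B C b c) : T₁ + T₂ ∈ ctrlTimes F B C a c := by
  obtain ⟨hT₁, u₁, y₁, hu₁, ⟨M₁, hM₁⟩, hy₁, hint₁, heq₁, hC₁, hy₁0, hy₁T⟩ := h₁
  obtain ⟨hT₂, u₂, y₂, hu₂, ⟨M₂, hM₂⟩, hy₂, hint₂, heq₂, hC₂, hy₂0, hy₂T⟩ := h₂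
  have hrhs : (fun s => F (concatAt T₁ y₁ y₂ s) + B (concatAt T₁ u₁ u₂ s)) =
      concatAt T₁ (fun s => F (y₁ s) + B (u₁ s)) (fun s => F (y₂ s) + B (u₂ s)) := by
    funext s; unfold concatAt; split_ifs <;> rfl
  have hbound : MapsTo (concatAt T₁ u₁ u₂) (Icc 0 (T₁ + T₂)) (closedBall 0 (max M₁ M₂)) :=
    mapsTo_concatAt (fun t ht => mem_closedBall_zero_iff.2 ((hM₁ t ht).trans (le_max_left _ _)))
      (fun t ht => mem_closedBall_zero_iff.2 ((hM₂ t ht).trans (le_max_right _ _)))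
  refine ⟨by positivity, concatAt T₁ u₁ u₂, concatAt T₁ y₁ y₂, hu₁.concatAt hu₂,
    ⟨max M₁ M₂, fun t ht => mem_closedBall_zero_iff.1 (hbound ht)⟩,
    hy₁.concatAt hy₂ (hy₁T.trans hy₂0.symm), ?_, ?_, mapsTo_concatAt hC₁ hC₂,
    by rw [concatAt_of_le hT₁.le, hy₁0],
    by rw [concatAt_of_lt (by linarith), add_sub_cancel_left, hy₂T]⟩
  · rw [hrhs]
    exact (intervalIntegrable_concatAt_left hint₁ hT₁.le).trans
      (intervalIntegrable_concatAt_right hint₂ (le_add_of_nonneg_right hT₂.le) le_rfl)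
  · rw [hrhs]
    exact concatAt_eq_add_integral hT₁.le hint₁ hint₂ heq₁ (hy₁T ▸ hy₂0 ▸ heq₂)

lemma mem_ctrlTimes_of_hasDerivWithinAt (hF : Continuous F) {y : ℝ → Euc n} {w : Euc m}
    {T : ℝ} (hT : 0 < T)
    (hy : ∀ t ∈ Icc 0 T, HasDerivWithinAt y (F (y t) + B w) (Icc 0 T) t)
    (hC : ∀ t ∈ Icc 0 T, y t ∈ C) :
    T ∈ ctrlTimes F B C (y 0) (y T) := by
  have hcont : ContinuousOn y (Icc 0 T) := fun t ht => (hy t ht).continuousWithinAt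
  have hint : ∀ t ∈ Icc 0 T, IntervalIntegrable (fun s => F (y s) + B w) volume 0 t :=
    fun t ht => ((hF.comp_continuousOn (hcont.mono (Icc_subset_Icc_right ht.2))).add
      continuousOn_const).intervalIntegrable_of_Icc ht.1
  refine ⟨hT, fun _ => w, y, measurable_const, ⟨‖w‖, fun _ _ => le_rfl⟩, hcont,
    hint T ⟨hT.le, le_rfl⟩, fun t ht => ?_, hC, rfl, rfl⟩
  rw [intervalIntegral.integral_eq_sub_of_hasDerivAt_of_le ht.1
    (hcont.mono (Icc_subset_Icc_right ht.2))
    (fun s hs => (hy s ⟨hs.1.le, hs.2.le.trans ht.2⟩).hasDerivAt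
      (Icc_mem_nhds hs.1 (hs.2.trans_le ht.2))) (hint t ht)]
  abel

lemma ReachWithin.trans (h₁ : ReachWithin F B C a b τ₁) (h₂ : ReachWithin F B C b c τ₂) :
    ReachWithin F B C a c (τ₁ + τ₂) :=
  let ⟨T₁, hT₁, hle₁⟩ := h₁
  let ⟨T₂, hT₂, hle₂⟩ := h₂
  ⟨T₁ + T₂, add_mem_ctrlTimes hT₁ hT₂, add_le_add hle₁ hle₂⟩

lemma ReachWithin.mono (h : ReachWithin F B C a b τ₁) (hτ : τ₁ ≤ τ₂) :
    ReachWithin F B C a b τ₂ :=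
  let ⟨T, hT, hle⟩ := h
  ⟨T, hT, hle.trans hτ⟩

lemma minTime_le_of_reachWithin (h : ReachWithin F B C a b τ) :
    minTime F B C a b ≤ ENNReal.ofReal τ :=
  let ⟨_, hT, hle⟩ := h
  (sInf_le (mem_image_of_mem _ hT)).trans (ENNReal.ofReal_le_ofReal hle)

lemma reachWithin_of_minTime_lt (h : minTime F B C a b < ENNReal.ofReal τ) :
    ReachWithin F B C a b τ := by
  obtain ⟨_, ⟨T, hT, rfl⟩, hlt⟩ := sInf_lt_iff.1 h
  exact ⟨T, hT, (ENNReal.ofReal_lt_ofReal_iff'.1 hlt).1.le⟩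

lemma exists_reachWithin_near_of_segment_subset {K : ℝ≥0} (hF : LipschitzWith K F)
    {y₀ x₁ : Euc n} (hseg : segment ℝ y₀ x₁ ⊆ interior C) (hd : x₁ - y₀ ∈ LinearMap.range B)
    {ρ ε : ℝ} (hρ : 0 < ρ) (hε : 0 < ε) :
    ∃ w ∈ closedBall x₁ ρ ∩ interior C, ReachWithin F B C y₀ w ε := by
  obtain ⟨w₀, hw₀⟩ := hd
  have hcompact : IsCompact (segment ℝ y₀ x₁) :=
    segment_eq_image' ℝ y₀ x₁ ▸ isCompact_Icc.image (by fun_prop)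
  obtain ⟨r, hr, hthick⟩ := hcompact.exists_thickening_subset_open isOpen_interior hseg
  obtain ⟨T, ⟨y, hy₀, hy, hnear⟩, hT, hTε⟩ :=
    ((eventually_exists_hasDerivWithinAt_near_line hF y₀ (x₁ - y₀) (lt_min hr hρ)).and
      (eventually_mem_nhdsWithin.and (nhdsWithin_le_nhds (eventually_le_nhds hε)))).exists
  have hT : 0 < T := hT
  have hmem : ∀ t ∈ Icc 0 T, y t ∈ interior C := fun t ht => hthick <|
    mem_thickening_iff.2 ⟨_, (segment_eq_image' ℝ y₀ x₁).symm ▸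
      mem_image_of_mem _ ⟨div_nonneg ht.1 hT.le, (div_le_one hT).2 ht.2⟩,
      (hnear t ht).trans_le (min_le_left _ _)⟩
  have hend : dist (y T) x₁ < ρ := by
    simpa [div_self hT.ne'] using (hnear T ⟨hT.le, le_rfl⟩).trans_le (min_le_right _ _)
  refine ⟨y T, ⟨hend.le, hmem T ⟨hT.le, le_rfl⟩⟩, T, ?_, hTε⟩
  rw [← hy₀]
  exact mem_ctrlTimes_of_hasDerivWithinAt hF.continuous (w := T⁻¹ • w₀) hT
    (by simpa [hw₀] using hy) fun t ht => interior_subset (hmem t ht)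

lemma exists_reachWithin_near {K : ℝ≥0} (hF : LipschitzWith K F) (hconv : Convex ℝ C)
    {y₀ x₀ : Euc n} (hy₀ : y₀ ∈ interior C) (hx₀ : x₀ ∈ C) (hd : x₀ - y₀ ∈ LinearMap.range B)
    {ρ ε : ℝ} (hρ : 0 < ρ) (hε : 0 < ε) :
    ∃ w ∈ closedBall x₀ ρ ∩ interior C, ReachWithin F B C y₀ w ε := by
  -- `x₀` may lie on the boundary, so aim first at a point `x₁` of the open segment `(y₀, x₀)`.
  have hlim : Tendsto (fun θ : ℝ => y₀ + θ • (x₀ - y₀)) (𝓝 1) (𝓝 x₀) :=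
    (show Continuous fun θ : ℝ => y₀ + θ • (x₀ - y₀) by fun_prop).tendsto' 1 x₀ (by simp)
  obtain ⟨θ, hθ1, hθ0, hθx⟩ := ((eventually_mem_nhdsWithin (s := Iio (1:ℝ))).and
    (nhdsWithin_le_nhds ((lt_mem_nhds one_pos).and
      (hlim.eventually (ball_mem_nhds x₀ (half_pos hρ)))))).exists
  have hθ1 : θ < 1 := hθ1
  have hx₁ : y₀ + θ • (x₀ - y₀) ∈ interior C := by
    convert hconv.combo_interior_closure_mem_interior hy₀ (subset_closure hx₀) (sub_pos.2 hθ1)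
      hθ0.le (by ring) using 1
    module
  obtain ⟨w, hw, hreach⟩ := exists_reachWithin_near_of_segment_subset hF
    (hconv.interior.segment_subset hy₀ hx₁)
    (by simpa using Submodule.smul_mem _ θ hd) (half_pos hρ) hε
  refine ⟨w, ⟨closedBall_subset_closedBall' ?_ hw.1, hw.2⟩, hreach⟩
  linarith [mem_ball.1 hθx]

def ApproxReach (F : Euc n → Euc n) (B : Euc m →ₗ[ℝ] Euc n) (C : Set (Euc n)) (a b : Euc n)
    (τ : ℝ) : Prop :=
  ∀ ε > (0:ℝ), ∃ δ > (0:ℝ), ∀ ya ∈ closedBall a δ ∩ interior C,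
    ∃ yb ∈ closedBall b ε ∩ interior C, ReachWithin F B C ya yb τ

lemma approxReach_of_forall_le
    (h : ∃ ε₀ > (0:ℝ), ∀ ε : ℝ, 0 < ε → ε ≤ ε₀ → ∃ δ > (0:ℝ),
      ∀ ya ∈ closedBall a δ ∩ interior C, ∃ yb ∈ closedBall b ε ∩ interior C,
        ReachWithin F B C ya yb τ) :
    ApproxReach F B C a b τ := by
  obtain ⟨ε₀, hε₀, h⟩ := h
  intro ε hε
  obtain ⟨δ, hδ, hreach⟩ := h (min ε ε₀) (lt_min hε hε₀) (min_le_right _ _)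
  refine ⟨δ, hδ, fun ya hya => ?_⟩
  obtain ⟨yb, hyb, hab⟩ := hreach ya hya
  exact ⟨yb, ⟨closedBall_subset_closedBall (min_le_left _ _) hyb.1, hyb.2⟩, hab⟩

lemma ApproxReach.trans (h₁ : ApproxReach F B C a b τ₁) (h₂ : ApproxReach F B C b c τ₂) :
    ApproxReach F B C a c (τ₁ + τ₂) := by
  intro ε hε
  obtain ⟨δ₂, hδ₂, hreach₂⟩ := h₂ ε hε
  obtain ⟨δ₁, hδ₁, hreach₁⟩ := h₁ δ₂ hδ₂
  refine ⟨δ₁, hδ₁, fun ya hya => ?_⟩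
  obtain ⟨ymid, hymid, hreach_mid⟩ := hreach₁ ya hya
  obtain ⟨yb, hyb, hreach_b⟩ := hreach₂ ymid hymid
  exact ⟨yb, hyb, hreach_mid.trans hreach_b⟩

lemma ApproxReach.mono (h : ApproxReach F B C a b τ₁) (hτ : τ₁ ≤ τ₂) :
    ApproxReach F B C a b τ₂ := fun ε hε =>
  let ⟨δ, hδ, hreach⟩ := h ε hε
  ⟨δ, hδ, fun ya hya => let ⟨yb, hyb, hab⟩ := hreach ya hya; ⟨yb, hyb, hab.mono hτ⟩⟩

lemma approxReach_of_chain {p : ℕ → Euc n} {σ : ℝ} {k : ℕ} (hk : 0 < k)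
    (hp : ∀ i < k, ApproxReach F B C (p i) (p (i + 1)) σ) :
    ApproxReach F B C (p 0) (p k) (k * σ) := by
  induction k, hk using Nat.le_induction with
  | base => simpa using hp 0 one_pos
  | succ k hk ih =>
    have := (ih fun i hi => hp i (by omega)).trans (hp k (by omega))
    rwa [← add_one_mul, ← Nat.cast_add_one] at this

lemma approxReach_of_steps {x : ℝ → Euc n} {τ : ℝ → ℝ → ℝ} {T t η : ℝ}
    (hstep : ∀ t₁ t₂ : ℝ, 0 ≤ t₁ → t₁ < t₂ → t₂ ≤ T →
      ApproxReach F B C (x t₁) (x t₂) (τ t₁ t₂))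
    (hτ : ∀ c > (1:ℝ), ∃ Δ0 > (0:ℝ), ∀ Δt : ℝ, 0 < Δt → Δt ≤ Δ0 →
      ∀ t : ℝ, 0 ≤ t → t ≤ T - Δt → τ t (t + Δt) ≤ c * Δt)
    (ht : 0 < t) (htT : t ≤ T) (hη : 0 < η) :
    ApproxReach F B C (x 0) (x t) (t + η) := by
  obtain ⟨Δ₀, hΔ₀, hτΔ⟩ := hτ (1 + η / t) (by simp [ht, hη])
  obtain ⟨N, hN⟩ := exists_nat_gt (t / Δ₀)
  have hN₀ : (0:ℝ) < N := (div_pos ht hΔ₀).trans hN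
  set Δ := t / N with hΔ
  have hΔpos : 0 < Δ := div_pos ht hN₀
  have hΔle : Δ ≤ Δ₀ := by
    rw [div_lt_iff₀ hΔ₀] at hN
    rw [hΔ, div_le_iff₀ hN₀]; linarith
  have hNΔ : N * Δ = t := by rw [hΔ]; field_simp
  have hchain : ApproxReach F B C (x ((0:ℕ) * Δ)) (x (N * Δ)) (N * ((1 + η / t) * Δ)) :=
    approxReach_of_chain (p := fun i : ℕ => x (i * Δ)) (Nat.cast_pos.1 hN₀) fun i hi => by
      have hi' : ((i : ℝ) + 1) * Δ ≤ t := by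
        rw [← hNΔ]; gcongr; exact_mod_cast hi
      have hnext : ((i + 1 : ℕ) : ℝ) * Δ = i * Δ + Δ := by push_cast; ring
      simp only [hnext]
      exact (hstep _ _ (by positivity) (by linarith) (by linarith)).mono
        (hτΔ Δ hΔpos hΔle _ (by positivity) (by linarith))
  rw [Nat.cast_zero, zero_mul, hNΔ] at hchain
  refine hchain.mono (le_of_eq ?_)
  rw [mul_left_comm, hNΔ]
  field_simp

lemma exists_reachWithin_of_terminal {x : ℝ → Euc n} {T : ℝ} {y₁ : Euc n}
    (hterm : ∃ δ : ℝ → ℝ, ∃ t0 : ℝ, t0 < T ∧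
      (∀ t : ℝ, t0 ≤ t → t < T → 0 < δ t ∧
        ∀ y ∈ closedBall (x t) (δ t) ∩ interior C, minTime F B C y y₁ ≠ ⊤) ∧
      (∀ ε > (0:ℝ), ∃ t1 : ℝ, t0 ≤ t1 ∧ t1 < T ∧ ∀ t : ℝ, t1 ≤ t → t < T →
        ∀ y ∈ closedBall (x t) (δ t) ∩ interior C, minTime F B C y y₁ ≤ ENNReal.ofReal ε))
    (hT : 0 < T) {η : ℝ} (hη : 0 < η) :
    ∃ t ∈ Ioo 0 T, ∃ δ > (0:ℝ), ∀ y ∈ closedBall (x t) δ ∩ interior C,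
      ReachWithin F B C y y₁ η := by
  obtain ⟨δ, t₀, -, hδ, hsmall⟩ := hterm
  obtain ⟨t₁, ht₀₁, ht₁T, hfast⟩ := hsmall (η / 2) (half_pos hη)
  have ht₁ : t₁ ≤ max t₁ (T / 2) := le_max_left _ _
  have htT : max t₁ (T / 2) < T := max_lt ht₁T (half_lt_self hT)
  refine ⟨max t₁ (T / 2), ⟨lt_max_of_lt_right (half_pos hT), htT⟩,
    δ _, (hδ _ (ht₀₁.trans ht₁) htT).1, fun y hy => reachWithin_of_minTime_lt ?_⟩
  exact (hfast _ ht₁ htT y hy).trans_lt (ENNReal.ofReal_lt_ofReal_iff'.2 ⟨half_lt_self hη, hη⟩)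

end ControlSystem

lemma projS_add_sub_mem_orthogonal {n : ℕ} (G : Submodule ℝ (Euc n)) (y : Euc n) {h : Euc n}
    (hh : h ∈ Gᗮ) : projS G y + h - y ∈ Gᗮ := by
  have hy := G.sub_starProjection_mem_orthogonal y
  rw [Submodule.starProjection_apply] at hy
  convert Gᗮ.sub_mem hh hy using 1
  simp only [projS]
  abel

theorem minTime_le_tildeTime_general {n m : ℕ}
    (F : Euc n → Euc n) (L_F : ℝ) (hF : LipschitzWith L_F.toNNReal F)
    (B : Euc m →ₗ[ℝ] Euc n)
    (C : Set (Euc n)) (hconv : Convex ℝ C)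
    (y0 y1 : Euc n) (hy0 : y0 ∈ interior C) :
    minTime F B C y0 y1 ≤ tildeTime F B C y0 y1 := by
  refine le_sInf ?_
  rintro _ ⟨T, ⟨hT, z, hp, ⟨-, hp_mem, -, hz, hzC, -⟩, τ, hstep, hterm, hτ⟩, rfl⟩
  refine ENNReal.le_of_forall_pos_le_add fun η hη _ => ?_
  have hη3 : 0 < (η : ℝ) / 3 := by positivity
  set x : ℝ → Euc n := fun t => z t + hp t
  obtain ⟨t, ⟨ht₀, htT⟩, δ, hδ, hfinal⟩ := exists_reachWithin_of_terminal (x := x) hterm hT hη3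
  obtain ⟨r, hr, hmiddle⟩ := approxReach_of_steps (x := x)
    (fun t₁ t₂ h₀ h₁₂ h₂ => approxReach_of_forall_le (hstep t₁ t₂ h₀ h₁₂ h₂).2) hτ ht₀ htT.le
    hη3 δ hδ
  have hx₀ : x 0 - y0 ∈ LinearMap.range B := by
    have hz₀ : z 0 = projS (LinearMap.range B)ᗮ y0 := by simpa using hz 0 ⟨le_rfl, hT.le⟩
    simpa [x, hz₀, Submodule.orthogonal_orthogonal] using
      projS_add_sub_mem_orthogonal _ y0 (hp_mem 0)
  obtain ⟨w, hw, hinitial⟩ :=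
    exists_reachWithin_near hF hconv hy0 (hzC 0 ⟨le_rfl, hT.le⟩) hx₀ hr hη3
  obtain ⟨yb, hyb, hmid⟩ := hmiddle w hw
  calc minTime F B C y0 y1 ≤ ENNReal.ofReal (η / 3 + (t + η / 3) + η / 3) :=
        minTime_le_of_reachWithin ((hinitial.trans hmid).trans (hfinal yb hyb))
    _ ≤ ENNReal.ofReal (T + η) := ENNReal.ofReal_le_ofReal (by linarith)
    _ = ENNReal.ofReal T + η := by
      rw [ENNReal.ofReal_add hT.le η.coe_nonneg, ENNReal.ofReal_coe_nnreal]

/-- Proposition 1 of the paper.  For all `y⁰, y¹` in the interior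
of `C`, the minimal controllability time is bounded above by the pliable
controllability time: `T_C(y⁰, y¹) ≤ T̃_C(y⁰, y¹)`. -/
theorem minTime_le_tildeTime {n m : ℕ} (hmn : m < n)
    (F : Euc n → Euc n) (L_F : ℝ) (hLF : 0 < L_F) (hF : LipschitzWith L_F.toNNReal F)
    (B : Euc m →ₗ[ℝ] Euc n) (hB : Function.Injective B)
    (C : Set (Euc n)) (hconv : Convex ℝ C) (hbdd : Bornology.IsBounded C)
    (hbdry : HasC1Boundary C)
    (y0 y1 : Euc n) (hy0 : y0 ∈ interior C) (hy1 : y1 ∈ interior C) :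
    minTime F B C y0 y1 ≤ tildeTime F B C y0 y1 :=
  minTime_le_tildeTime_general F L_F hF B C hconv y0 y1 hy0
end
end
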